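/- Let H be a modular hyperplane of a matroid M with complementary cocircuit C* = E(M)−H. Then cl(C*) ∩ H is a round set of M. -/

import Mathlib

open Set

namespace Matroid

variable {α : Type*} {β : Type*}

/-- The rank of a set in a matroid: the supremum of sizes of independent subsets. -/
noncomputable def mRank (M : Matroid α) (X : Set α) : ℕ :=
  sSup {n : ℕ | ∃ I, M.Indep I ∧ I ⊆ X ∧ I.ncard = n}

/-- The rank of a matroid. -/
noncomputable def mRk (M : Matroid α) : ℕ := M.mRank M.E

/-- A flat `F` is modular if `r F + r F' = r (F ∪ F') + r (F ∩ F')` for every flat `F'`. -/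
def IsModularFlat (M : Matroid α) (F : Set α) : Prop :=
  M.IsFlat F ∧ ∀ F', M.IsFlat F' →
    M.mRank F + M.mRank F' = M.mRank (F ∪ F') + M.mRank (F ∩ F')

/-- A proper flat is a flat other than the ground set. -/
def IsProperFlat (M : Matroid α) (F : Set α) : Prop := M.IsFlat F ∧ F ≠ M.E

/-- A vertical cover is a pair of proper flats whose union is the ground set. -/
def VerticalCover (M : Matroid α) (F F' : Set α) : Prop :=
  M.IsProperFlat F ∧ M.IsProperFlat F' ∧ F ∪ F' = M.E

/-- A modular cover is a vertical cover by two modular flats. -/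
def ModularCover (M : Matroid α) (F F' : Set α) : Prop :=
  M.VerticalCover F F' ∧ M.IsModularFlat F ∧ M.IsModularFlat F'

/-- A matroid is round if it has no vertical cover. -/
def Round (M : Matroid α) : Prop := ∀ F F', ¬ M.VerticalCover F F'

/-- A subset of the ground set is round if the restriction to it is round. -/
def RoundSet (M : Matroid α) (X : Set α) : Prop := X ⊆ M.E ∧ (M ↾ X).Round

/-- A rotunda is a maximal round flat. -/
def Rotunda (M : Matroid α) (R : Set α) : Prop :=
  M.IsFlat R ∧ M.RoundSet R ∧ ∀ R', M.IsFlat R' → M.RoundSet R' → R ⊆ R' → R' = R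

/-- A matroid of rank `r` is supersolvable if there is a chain of modular flats
`F 0 ⊆ F 1 ⊆ ⋯ ⊆ F r` with `r (F i) = i` for each `i`. -/
def Supersolvable (M : Matroid α) : Prop :=
  ∃ F : ℕ → Set α, (∀ i ≤ M.mRk, M.IsModularFlat (F i) ∧ M.mRank (F i) = i) ∧
    ∀ i < M.mRk, F i ⊆ F (i + 1)

/-- A matroid is saturated if every round flat is modular. -/
def Saturated (M : Matroid α) : Prop :=
  ∀ F, M.IsFlat F → M.RoundSet F → M.IsModularFlat F

/-- A circuit: a minimal dependent subset of the ground set. -/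
def Circ (M : Matroid α) (C : Set α) : Prop :=
  C ⊆ M.E ∧ ¬ M.Indep C ∧ ∀ D ⊂ C, M.Indep D

/-- A matroid is connected if it is non-empty and every two distinct elements lie in a
common circuit. -/
def ConnectedM (M : Matroid α) : Prop :=
  M.E.Nonempty ∧ ∀ x ∈ M.E, ∀ y ∈ M.E, x = y ∨ ∃ C, M.Circ C ∧ x ∈ C ∧ y ∈ C

/-- A hyperplane: a flat of rank `r M - 1`. -/
def IsHyperplane (M : Matroid α) (H : Set α) : Prop :=
  M.IsFlat H ∧ M.mRank H + 1 = M.mRk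

/-- The union of the projections `P_H(x, y) = H ∩ cl (x ∪ y)` onto the modular hyperplane `H`,
taken over all pairs of distinct rank-one flats `x = cl {a}`, `y = cl {b}` spanned by
elements `a, b` of `X`. -/
def projUnion (M : Matroid α) (H X : Set α) : Set α :=
  ⋃ a ∈ X, ⋃ b ∈ X, ⋃ (_ : M.closure {a} ≠ M.closure {b}), H ∩ M.closure {a, b}

/-- Two elements are related if they are equal or lie in a common circuit; the connected
components of a matroid are the restrictions to the equivalence classes of this relation. -/
def connRel (M : Matroid α) (x y : α) : Prop :=
  x = y ∨ ∃ C, M.Circ C ∧ x ∈ C ∧ y ∈ C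

/-- The rotunda graph of a matroid: vertices are the rotunda; two rotunda are adjacent if
they intersect and there is a modular cover separating them at their intersection. -/
def rotundaGraph (M : Matroid α) : SimpleGraph {R : Set α // M.Rotunda R} where
  Adj R₁ R₂ := R₁ ≠ R₂ ∧ (R₁.1 ∩ R₂.1).Nonempty ∧
    ∃ F₁ F₂, M.ModularCover F₁ F₂ ∧ R₁.1 ⊆ F₁ ∧ R₂.1 ⊆ F₂ ∧ F₁ ∩ F₂ = R₁.1 ∩ R₂.1
  symm := ⟨by
    rintro a b ⟨hne, hint, F₁, F₂, ⟨⟨hp1, hp2, hu⟩, hm1, hm2⟩, h1, h2, hi⟩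
    refine ⟨hne.symm, by rwa [Set.inter_comm], F₂, F₁,
      ⟨⟨hp2, hp1, by rwa [Set.union_comm]⟩, hm2, hm1⟩, h2, h1, ?_⟩
    rw [Set.inter_comm, hi, Set.inter_comm]⟩
  loopless := ⟨fun a h => h.1 rfl⟩

/-- A rotunda tree of `M`: a tree on the rotunda of `M` such that for each element `x` of the
ground set, the rotunda containing `x` induce a (nonempty) subtree. -/
def IsRotundaTree (M : Matroid α) (T : SimpleGraph {R : Set α // M.Rotunda R}) : Prop :=
  T.IsTree ∧ ∀ x ∈ M.E, (T.induce {t : {R : Set α // M.Rotunda R} | x ∈ t.1}).Connected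

/-- A legitimate weighting of `M`: zero on the empty set, and strictly monotone under proper
inclusion on the set consisting of `∅` and the pairwise intersections of distinct rotunda. -/
def LegitimateWeighting (M : Matroid α) (σ : Set α → ℕ) : Prop :=
  σ ∅ = 0 ∧
  ∀ X X' : Set α,
    (X = ∅ ∨ ∃ R R', M.Rotunda R ∧ M.Rotunda R' ∧ R ≠ R' ∧ X = R ∩ R') →
    (X' = ∅ ∨ ∃ R R', M.Rotunda R ∧ M.Rotunda R' ∧ R ≠ R' ∧ X' = R ∩ R') →
    X ⊂ X' → σ X < σ X'

/-- The total weight of a graph on the rotunda of `M`, where the edge joining rotunda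
`R` and `R'` gets weight `σ (R ∩ R')`. -/
noncomputable def treeWeight {M : Matroid α} (σ : Set α → ℕ)
    (T : SimpleGraph {R : Set α // M.Rotunda R}) : ℕ :=
  ∑ᶠ e ∈ T.edgeSet,
    Sym2.lift ⟨fun a b => σ (a.1 ∩ b.1), fun a b => by simp [Set.inter_comm]⟩ e

/-- A tree-decomposition of a matroid: a tree together with bags covering the ground set. -/
def IsTreeDecomp (M : Matroid α) (T : SimpleGraph β) (τ : β → Set α) : Prop :=
  T.IsTree ∧ ∀ x ∈ M.E, ∃ t, x ∈ τ t

/-- The node-width of a node `t` in a tree-decomposition `(T, τ)` of `M`: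
`(Σ_i r (τ t ∪ ⋃_{k ≠ i} F_k)) − (d − 1) · r M`, where `F_1, …, F_d` are the unions of the
bags over the connected components of `T − t`. -/
noncomputable def nodeWidth (M : Matroid α) (T : SimpleGraph β) (τ : β → Set α) (t : β) : ℤ :=
  (∑ᶠ c : (T.induce {s : β | s ≠ t}).ConnectedComponent,
      (M.mRank (τ t ∪ ⋃ (s : {s : β // s ≠ t})
        (_ : (T.induce {s : β | s ≠ t}).connectedComponentMk s ≠ c), τ s.1) : ℤ))
    - ((Nat.card (T.induce {s : β | s ≠ t}).ConnectedComponent : ℤ) - 1) * (M.mRk : ℤ)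

/-- The width of a tree-decomposition: the maximum node-width. -/
noncomputable def decompWidth (M : Matroid α) (T : SimpleGraph β) (τ : β → Set α) : ℤ :=
  sSup (Set.range (M.nodeWidth T τ))

/-- The tree-width of a matroid: the minimum width of a (finite) tree-decomposition. -/
noncomputable def treeWidth (M : Matroid α) : ℕ :=
  sInf {n : ℕ | ∃ (β : Type) (T : SimpleGraph β) (τ : β → Set α),
    Finite β ∧ M.IsTreeDecomp T τ ∧ ∀ t, M.nodeWidth T τ t ≤ (n : ℤ)}

end Matroid

namespace SimpleGraph

/-- A graph is chordal if every cycle with at least four edges has a chord: an edge of the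
graph joining two vertices of the cycle that is not an edge of the cycle. -/
def IsChordal {V : Type*} (G : SimpleGraph V) : Prop :=
  ∀ ⦃v : V⦄ (w : G.Walk v v), w.IsCycle → 4 ≤ w.length →
    ∃ x y, x ∈ w.support ∧ y ∈ w.support ∧ G.Adj x y ∧ s(x, y) ∉ w.edges

/-- A maximal clique of a graph. -/
def MaxClique {V : Type*} (G : SimpleGraph V) (C : Set V) : Prop :=
  G.IsClique C ∧ ∀ D, G.IsClique D → C ⊆ D → D = C

/-- The reduced clique graph of a graph: vertices are the maximal cliques; two maximal
cliques are adjacent if they intersect and every walk from one side to the other passes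
through their intersection. -/
def reducedCliqueGraph {V : Type*} (G : SimpleGraph V) :
    SimpleGraph {C : Set V // G.MaxClique C} where
  Adj C₁ C₂ := C₁ ≠ C₂ ∧ (C₁.1 ∩ C₂.1).Nonempty ∧
    ∀ u ∈ C₁.1 \ C₂.1, ∀ v ∈ C₂.1 \ C₁.1, ∀ p : G.Walk u v,
      ∃ z ∈ p.support, z ∈ C₁.1 ∩ C₂.1
  symm := ⟨by
    rintro a b ⟨hne, hint, hsep⟩
    refine ⟨hne.symm, by rwa [Set.inter_comm], fun u hu v hv p => ?_⟩
    obtain ⟨z, hz, hz2⟩ := hsep v hv u hu p.reverse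
    refine ⟨z, ?_, by rwa [Set.inter_comm]⟩
    simpa [SimpleGraph.Walk.support_reverse] using hz⟩
  loopless := ⟨fun a h => h.1 rfl⟩

end SimpleGraph

open Matroid

/-! For a flat `F ⊆ H` and `c ∉ H`, exchange shows that `cl (F ∪ {c}) ∩ H = F` and that
`d ↦ cl (F ∪ {d})` partitions `C* = E − H` into classes. Suppose `F₁ ∪ F₂ = cl C* ∩ H` is a
vertical cover. For `c, d ∈ C*` spanning a line, modularity of `H` makes that line meet `H` in a
point of `cl C* ∩ H`, hence of `F₁` or `F₂`, so `c` and `d` lie in a common class for `F₁` or for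
`F₂`. One of the two partitions must then have a single class, say that of `F₁`; so
`C* ⊆ cl (F₁ ∪ {c})`, whence `cl C* ∩ H ⊆ F₁`, a contradiction. -/

theorem Set.forall_eq_or_forall_eq_of_forall_eq_or_eq {ι β γ : Type*} {S : Set ι}
    {f : ι → β} {g : ι → γ} (h : ∀ a ∈ S, ∀ b ∈ S, f a = f b ∨ g a = g b) :
    (∀ a ∈ S, ∀ b ∈ S, f a = f b) ∨ ∀ a ∈ S, ∀ b ∈ S, g a = g b := by
  by_contra! ⟨⟨a, ha, b, hb, hfab⟩, c, hc, d, hd, hgcd⟩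
  have hg : ∀ e ∈ S, g e = g a := fun e he => by
    by_contra hne
    have hga : g a = g b := (h a ha b hb).resolve_left hfab
    exact hfab (((h e he a ha).resolve_right hne).symm.trans
      ((h e he b hb).resolve_right (hga ▸ hne)))
  exact hgcd ((hg c hc).trans (hg d hd).symm)

namespace Matroid

variable {α : Type*} {M : Matroid α} {F G H R X Y : Set α} {c d e x : α}

lemma mRank_eq_eRk [M.RankFinite] (X : Set α) : (M.mRank X : ℕ∞) = M.eRk X := by
  obtain ⟨I, hI⟩ := M.exists_isBasis' X
  have hmax : IsGreatest {n | ∃ J, M.Indep J ∧ J ⊆ X ∧ J.ncard = n} I.ncard := by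
    refine ⟨⟨I, hI.indep, hI.subset, rfl⟩, ?_⟩
    rintro _ ⟨J, hJ, hJX, rfl⟩
    rw [← Nat.cast_le (α := ℕ∞), hJ.finite.cast_ncard_eq, hI.indep.finite.cast_ncard_eq,
      hI.encard_eq_eRk]
    exact hJ.encard_le_eRk_of_subset hJX
  rw [mRank, hmax.csSup_eq, hI.indep.finite.cast_ncard_eq, hI.encard_eq_eRk]

lemma mRank_mono [M.RankFinite] (h : X ⊆ Y) : M.mRank X ≤ M.mRank Y := by
  rw [← Nat.cast_le (α := ℕ∞), mRank_eq_eRk, mRank_eq_eRk]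
  exact M.eRk_mono h

lemma mRank_insert_eq_add_one [M.RankFinite] (he : e ∈ M.E \ M.closure X) :
    M.mRank (insert e X) = M.mRank X + 1 := by
  rw [← Nat.cast_inj (R := ℕ∞), Nat.cast_add, mRank_eq_eRk, mRank_eq_eRk, Nat.cast_one]
  exact M.eRk_insert_eq_add_one he

lemma IsHyperplane.diff_nonempty (hH : M.IsHyperplane H) : (M.E \ H).Nonempty := by
  rw [nonempty_iff_ne_empty, Ne, sdiff_eq_empty]
  intro hEH
  have h := hH.2
  rw [mRk, hEH.antisymm hH.1.subset_ground] at h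
  omega

lemma IsModularFlat.mRank_inter_add_one [M.RankFinite] (hmod : M.IsModularFlat H)
    (hH : M.IsHyperplane H) (hG : M.IsFlat G) (heG : e ∈ G) (heH : e ∉ H) :
    M.mRank (G ∩ H) + 1 = M.mRank G := by
  have hunion : M.mRank (H ∪ G) = M.mRank H + 1 := by
    refine le_antisymm ?_ ?_
    · rw [hH.2]
      exact mRank_mono (union_subset hH.1.subset_ground hG.subset_ground)
    · rw [← mRank_insert_eq_add_one ⟨hG.subset_ground heG, by rwa [hH.1.closure]⟩]
      exact mRank_mono (insert_subset (Or.inr heG) subset_union_left)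
  have h := hmod.2 G hG
  rw [hunion, inter_comm] at h
  omega

lemma IsModularFlat.exists_isNonloop_mem_closure_pair_inter [M.RankFinite]
    (hmod : M.IsModularFlat H) (hH : M.IsHyperplane H) (hc : c ∈ M.E \ H)
    (hd : d ∈ M.E \ M.closure {c}) : ∃ x ∈ M.closure {c, d} ∩ H, M.IsNonloop x := by
  have hcd : M.Indep {c, d} := by
    have hc' : M.IsNonloop c := isNonloop_of_notMem_closure (by rw [hH.1.closure]; exact hc.2) hc.1
    rw [pair_comm, (indep_singleton.2 hc').insert_indep_iff]
    exact Or.inl hd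
  have hne : c ≠ d := by
    rintro rfl
    exact hd.2 (M.mem_closure_self c hc.1)
  have hrk := hmod.mRank_inter_add_one hH (M.isFlat_closure {c, d})
    (M.mem_closure_of_mem (mem_insert c {d}) hcd.subset_ground) hc.2
  rw [← Nat.cast_inj (R := ℕ∞), Nat.cast_add, Nat.cast_one, mRank_eq_eRk, mRank_eq_eRk,
    eRk_closure_eq, hcd.eRk_eq_encard, encard_pair hne] at hrk
  have hpos : M.eRk (M.closure {c, d} ∩ H) ≠ 0 := by
    rintro h0
    rw [h0] at hrk
    norm_num at hrk
  rw [Ne, eRk_eq_zero_iff', not_subset] at hpos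
  obtain ⟨x, ⟨hx, hxE⟩, hxl⟩ := hpos
  exact ⟨x, hx, isNonloop_of_not_isLoop hxE hxl⟩

lemma IsFlat.closure_compl_inter_subset_closure (hH : M.IsFlat H) (hFH : F ⊆ H)
    (hc : c ∈ M.E \ H) (h : ∀ d ∈ M.E \ H, M.closure (insert d F) = M.closure (insert c F)) :
    M.closure (M.E \ H) ∩ H ⊆ M.closure F := by
  have hsub : M.E \ H ⊆ M.closure (insert c F) := fun d hd =>
    h d hd ▸ M.mem_closure_of_mem (mem_insert d F) (insert_subset hd.1 (hFH.trans hH.subset_ground))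
  rintro y ⟨hy, hyH⟩
  by_contra hyF
  have hcy := M.closure_exchange ⟨M.closure_subset_closure_of_subset_closure hsub hy, hyF⟩
  exact hc.2 (hH.closure ▸ M.closure_subset_closure (insert_subset hyH hFH) hcy.1)

lemma IsFlat.mem_closure_insert_of_isNonloop_mem_closure_pair (hH : M.IsFlat H)
    (hFH : F ⊆ H) (hc : c ∉ H) (hx : M.IsNonloop x) (hxcd : x ∈ M.closure {c, d})
    (hxF : x ∈ F) : d ∈ M.closure (insert c F) := by
  have hxc : x ∉ M.closure {c} := fun h =>
    hc (hH.closure ▸ M.closure_subset_closure (singleton_subset_iff.2 (hFH hxF))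
      (hx.mem_closure_singleton h))
  rw [pair_comm] at hxcd
  have hdx := M.closure_exchange ⟨hxcd, hxc⟩
  exact M.closure_subset_closure (insert_subset (mem_insert_of_mem c hxF)
    (singleton_subset_iff.2 (mem_insert c F))) hdx.1

lemma IsModularFlat.closure_insert_eq_or_closure_insert_eq [M.RankFinite]
    (hmod : M.IsModularFlat H) (hH : M.IsHyperplane H) {F₁ F₂ : Set α} (hF₁H : F₁ ⊆ H)
    (hF₂H : F₂ ⊆ H) (hcover : M.closure (M.E \ H) ∩ H ⊆ F₁ ∪ F₂) (hc : c ∈ M.E \ H)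
    (hd : d ∈ M.E \ H) :
    M.closure (insert c F₁) = M.closure (insert d F₁) ∨
      M.closure (insert c F₂) = M.closure (insert d F₂) := by
  have hcongr : ∀ F ⊆ H, d ∈ M.closure (insert c F) →
      M.closure (insert c F) = M.closure (insert d F) := fun F hFH hdF =>
    (M.closure_insert_congr
      ⟨hdF, fun h => hd.2 (hH.1.closure ▸ M.closure_subset_closure hFH h)⟩).symm
  by_cases hdc : d ∈ M.closure {c}
  · exact Or.inl (hcongr F₁ hF₁H
      (M.closure_subset_closure (singleton_subset_iff.2 (mem_insert c F₁)) hdc))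
  obtain ⟨x, ⟨hxcd, hxH⟩, hx⟩ := hmod.exists_isNonloop_mem_closure_pair_inter hH hc ⟨hd.1, hdc⟩
  rcases hcover ⟨M.closure_subset_closure (pair_subset hc hd) hxcd, hxH⟩ with hx₁ | hx₂
  · exact Or.inl (hcongr F₁ hF₁H
      (hH.1.mem_closure_insert_of_isNonloop_mem_closure_pair hF₁H hc.2 hx hxcd hx₁))
  · exact Or.inr (hcongr F₂ hF₂H
      (hH.1.mem_closure_insert_of_isNonloop_mem_closure_pair hF₂H hc.2 hx hxcd hx₂))

lemma IsFlat.eq_ground_of_subset_closure (hR : R ⊆ M.E) (hF : (M ↾ R).IsFlat F)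
    (hRF : R ⊆ M.closure F) : F = R := by
  have hFR : F ⊆ R := hF.subset_ground
  rw [← hF.closure, restrict_closure_eq M hFR hR]
  exact inter_eq_right.2 hRF

end Matroid

/-- Let `H` be a modular hyperplane of `M` with complementary cocircuit `C* = E(M) − H`.
Then `cl C* ∩ H` is a round set of `M`. -/
theorem closure_cocircuit_inter_hyperplane_round {α : Type*} (M : Matroid α) [M.Finite]
    (H : Set α) (hH : M.IsHyperplane H) (hmod : M.IsModularFlat H) :
    M.RoundSet (M.closure (M.E \ H) ∩ H) := by
  set X := M.closure (M.E \ H) ∩ H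
  have hXH : X ⊆ H := inter_subset_right
  have hXE : X ⊆ M.E := hXH.trans hH.1.subset_ground
  refine ⟨hXE, fun F₁ F₂ ⟨⟨hF₁, hF₁X⟩, ⟨hF₂, hF₂X⟩, hcover⟩ => ?_⟩
  rw [restrict_ground_eq] at hF₁X hF₂X hcover
  have hF₁H : F₁ ⊆ H := (subset_union_left.trans hcover.subset).trans hXH
  have hF₂H : F₂ ⊆ H := (subset_union_right.trans hcover.subset).trans hXH
  obtain ⟨c, hc⟩ := hH.diff_nonempty
  rcases Set.forall_eq_or_forall_eq_of_forall_eq_or_eq fun a ha b hb =>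
    hmod.closure_insert_eq_or_closure_insert_eq hH hF₁H hF₂H hcover.superset ha hb with h | h
  · exact hF₁X (hF₁.eq_ground_of_subset_closure hXE
      (hH.1.closure_compl_inter_subset_closure hF₁H hc fun d hd => h d hd c hc))
  · exact hF₂X (hF₂.eq_ground_of_subset_closure hXE
      (hH.1.closure_compl_inter_subset_closure hF₂H hc fun d hd => h d hd c hc))
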